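/- In the setup (G centerless, f, h : G → Aut(G) with h(σ) = conj(g(σ))∘f(σ), g a bijection satisfying g(στ) = g(σ)·f(σ)(g(τ)), and N = {ρ(g(σ))∘f(σ) : σ ∈ G} a normal subgroup of Hol(G)), the following are equivalent: (d) {f(σ)h(σ) : σ ∈ G} = Inn(G); (e) the quotient G/(ker(f)·ker(h)) is elementary 2-abelian, i.e., σ² ∈ ker(f)·ker(h) for every σ ∈ G. -/

import Mathlib

/-- The left regular representation `λ : G →* Perm G`, `λ(σ)(x) = σ·x`. -/
def lambda (G : Type*) [Group G] : G →* Equiv.Perm G where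
  toFun σ := Equiv.mulLeft σ
  map_one' := by ext x; simp
  map_mul' σ τ := by ext x; simp [mul_assoc]

/-- The right regular representation `ρ : G →* Perm G`, `ρ(σ)(x) = x·σ⁻¹`. -/
def rho (G : Type*) [Group G] : G →* Equiv.Perm G where
  toFun σ := Equiv.mulRight σ⁻¹
  map_one' := by ext x; simp
  map_mul' σ τ := by ext x; simp [mul_assoc]

/-- The holomorph `Hol(G)`: the normalizer of `λ(G)` in `Perm G`. -/
def Hol (G : Type*) [Group G] : Subgroup (Equiv.Perm G) :=
  Subgroup.normalizer (((lambda G).range : Subgroup (Equiv.Perm G)) : Set (Equiv.Perm G))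

/-!
Put `n σ = ρ(g σ) ∘ f σ`, `K = λ⁻¹(N)` and `L = ρ⁻¹(N)`. As `λ(G)`, `ρ(G)` and `N` are normal in
`Hol(G)`, the commutators `[λ(z), n μ]` and `[ρ(z), n μ]` show that every `f μ` acts trivially on
`G/K` and every `h μ` on `G/L`, while `K ∩ L = 1` because the centre is trivial. So if
`f μ = conj (g β)`, then `h β = conj (g β) ∘ f β` acts trivially on both quotients, whence
`h β = 1`, `f β = (f μ)⁻¹` and `f⁻¹(Inn G) = ker f · ker h`. Since
`f σ h σ = conj (f σ (g σ)) · f (σ²)`, this settles one inclusion. For the other, pick `σ` with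
`f σ = f ν⁻¹` and `h σ = h ν`, where `g ν = τ`: then `f σ h σ` is `conj τ` conjugated by `(f ν)⁻¹`,
and conjugating `n σ` by `f ν ∈ Hol(G)` shows that `{f σ h σ}` is stable under conjugation by
automorphisms.
-/

open Subgroup

theorem MonoidHom.exists_eq_and_eq_of_inv_mul_mem_sup_ker {G H K : Type*} [Group G] [Group H]
    [Group K] (f₁ : G →* H) (f₂ : G →* K) {x y : G} (hxy : x⁻¹ * y ∈ f₁.ker ⊔ f₂.ker) :
    ∃ z, f₁ z = f₁ x ∧ f₂ z = f₂ y := by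
  obtain ⟨a, ha, b, hb, hab⟩ := mem_sup_of_normal_right.1 hxy
  have hz : x * a = y * b⁻¹ := by rw [eq_mul_inv_iff_mul_eq, mul_assoc, hab, mul_inv_cancel_left]
  refine ⟨x * a, by rw [map_mul, f₁.mem_ker.1 ha, mul_one], ?_⟩
  rw [hz, map_mul, map_inv, f₂.mem_ker.1 hb, inv_one, mul_one]

theorem MulAut.conj_apply_mulAut {G : Type*} [Group G] (φ : MulAut G) (y : G) :
    MulAut.conj (φ y) = φ * MulAut.conj y * φ⁻¹ := by
  ext x
  simp [MulAut.conj_apply]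

theorem eq_one_of_conj_eq_one {G : Type*} [Group G] (hZ : center G = ⊥) {y : G}
    (hy : MulAut.conj y = 1) : y = 1 := by
  have hyz : y ∈ center G := mem_center_iff.2 fun z => by
    have := congr($hy z)
    rw [MulAut.conj_apply, MulAut.one_apply, mul_inv_eq_iff_eq_mul] at this
    exact this.symm
  rwa [hZ, mem_bot] at hyz

section Holomorph

variable {G : Type*} [Group G]

@[simp]
theorem lambda_apply (s x : G) : lambda G s x = s * x := rfl

@[simp]
theorem rho_apply (s x : G) : rho G s x = x * s⁻¹ := rfl

@[simp]
theorem MulAut.toPerm_apply (φ : MulAut G) (x : G) : MulAut.toPerm G φ x = φ x := rfl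

@[simp]
theorem rho_mul_toPerm_apply (u : G) (φ : MulAut G) (x : G) :
    (rho G u * MulAut.toPerm G φ) x = φ x * u⁻¹ := rfl

theorem rho_mul_toPerm_inj {u u' : G} {φ φ' : MulAut G} :
    rho G u * MulAut.toPerm G φ = rho G u' * MulAut.toPerm G φ' ↔ u = u' ∧ φ = φ' := by
  refine ⟨fun he => ?_, fun ⟨hu, hφ⟩ => hu ▸ hφ ▸ rfl⟩
  have hu : u = u' := by simpa using congr($he 1)
  subst hu
  exact ⟨rfl, MulEquiv.ext fun x => mul_right_cancel congr($he x)⟩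

theorem lambda_eq_rho_mul_toPerm (y : G) :
    lambda G y = rho G y⁻¹ * MulAut.toPerm G (MulAut.conj y) := by
  ext x
  rw [rho_mul_toPerm_apply]
  simp [MulAut.conj_apply]

theorem rho_eq_rho_mul_toPerm_one (u : G) : rho G u = rho G u * MulAut.toPerm G 1 := by
  rw [map_one, mul_one]

theorem rho_mul_toPerm_conj_lambda (u : G) (φ : MulAut G) (t : G) :
    rho G u * MulAut.toPerm G φ * lambda G t * (rho G u * MulAut.toPerm G φ)⁻¹ =
      lambda G (φ t) := by
  rw [mul_inv_eq_iff_eq_mul]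
  ext x
  simp [mul_assoc]

theorem rho_mul_toPerm_conj_rho (u : G) (φ : MulAut G) (t : G) :
    rho G u * MulAut.toPerm G φ * rho G t * (rho G u * MulAut.toPerm G φ)⁻¹ =
      rho G (u * φ t * u⁻¹) := by
  rw [mul_inv_eq_iff_eq_mul]
  ext x
  simp [mul_assoc]

theorem toPerm_conj_rho_mul_toPerm (ψ : MulAut G) (u : G) (φ : MulAut G) :
    MulAut.toPerm G ψ * (rho G u * MulAut.toPerm G φ) * (MulAut.toPerm G ψ)⁻¹ =
      rho G (ψ u) * MulAut.toPerm G (ψ * φ * ψ⁻¹) := by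
  rw [mul_inv_eq_iff_eq_mul]
  ext x
  simp only [Equiv.Perm.mul_apply, MulAut.toPerm_apply]
  simp

theorem rho_mul_toPerm_mem_Hol (u : G) (φ : MulAut G) :
    rho G u * MulAut.toPerm G φ ∈ Hol G := by
  rw [Hol, mem_normalizer_iff_conj_image_eq, MonoidHom.coe_range, ← Set.range_comp]
  have hcomp : MulAut.conj (rho G u * MulAut.toPerm G φ) ∘ lambda G = lambda G ∘ φ :=
    funext (rho_mul_toPerm_conj_lambda u φ)
  rw [hcomp, φ.surjective.range_comp]

theorem lambda_mem_Hol (s : G) : lambda G s ∈ Hol G := by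
  rw [lambda_eq_rho_mul_toPerm]
  exact rho_mul_toPerm_mem_Hol _ _

theorem rho_mem_Hol (s : G) : rho G s ∈ Hol G := by
  rw [rho_eq_rho_mul_toPerm_one]
  exact rho_mul_toPerm_mem_Hol _ _

theorem toPerm_mem_Hol (φ : MulAut G) : MulAut.toPerm G φ ∈ Hol G := by
  simpa using rho_mul_toPerm_mem_Hol 1 φ

end Holomorph

section RegularSubgroup

variable {G : Type*} [Group G] {f h : G →* MulAut G} {g : Equiv.Perm G}
  {N : Subgroup (Equiv.Perm G)}

theorem rho_mul_toPerm_mem_iff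
    (hN : (N : Set (Equiv.Perm G)) = {q | ∃ σ : G, q = rho G (g σ) * MulAut.toPerm G (f σ)})
    {u : G} {φ : MulAut G} : rho G u * MulAut.toPerm G φ ∈ N ↔ ∃ σ, g σ = u ∧ f σ = φ := by
  rw [← SetLike.mem_coe, hN, Set.mem_ofPred_eq]
  exact exists_congr fun σ => by rw [rho_mul_toPerm_inj, eq_comm, @eq_comm _ φ]

theorem rho_mul_toPerm_self_mem
    (hN : (N : Set (Equiv.Perm G)) = {q | ∃ σ : G, q = rho G (g σ) * MulAut.toPerm G (f σ)})
    (σ : G) : rho G (g σ) * MulAut.toPerm G (f σ) ∈ N :=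
  (rho_mul_toPerm_mem_iff hN).2 ⟨σ, rfl, rfl⟩

theorem comap_lambda_normal (hNnorm : ∀ x ∈ Hol G, ∀ n ∈ N, x * n * x⁻¹ ∈ N) :
    (N.comap (lambda G)).Normal :=
  ⟨fun y hy s => by simpa using hNnorm _ (lambda_mem_Hol s) _ hy⟩

theorem disjoint_comap_lambda_comap_rho (hZ : center G = ⊥)
    (hN : (N : Set (Equiv.Perm G)) = {q | ∃ σ : G, q = rho G (g σ) * MulAut.toPerm G (f σ)}) :
    Disjoint (N.comap (lambda G)) (N.comap (rho G)) := by
  refine disjoint_def.2 fun {y} hlam hrho => eq_one_of_conj_eq_one hZ ?_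
  rw [mem_comap, lambda_eq_rho_mul_toPerm, rho_mul_toPerm_mem_iff hN] at hlam
  rw [← inv_mem_iff, mem_comap, rho_eq_rho_mul_toPerm_one, rho_mul_toPerm_mem_iff hN] at hrho
  obtain ⟨σ, hgσ, hfσ⟩ := hlam
  obtain ⟨σ', hgσ', hfσ'⟩ := hrho
  rw [← hfσ, g.injective (hgσ.trans hgσ'.symm), hfσ']

theorem mul_inv_apply_mem_comap_lambda (hNnorm : ∀ x ∈ Hol G, ∀ n ∈ N, x * n * x⁻¹ ∈ N)
    {u : G} {φ : MulAut G} (hq : rho G u * MulAut.toPerm G φ ∈ N) (z : G) :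
    z * (φ z)⁻¹ ∈ N.comap (lambda G) := by
  rw [mem_comap, map_mul, map_inv, ← rho_mul_toPerm_conj_lambda u φ z]
  simpa [mul_assoc] using mul_mem (hNnorm _ (lambda_mem_Hol z) _ hq) (inv_mem hq)

theorem mul_inv_conj_apply_mem_comap_rho (hNnorm : ∀ x ∈ Hol G, ∀ n ∈ N, x * n * x⁻¹ ∈ N)
    {u : G} {φ : MulAut G} (hq : rho G u * MulAut.toPerm G φ ∈ N) (z : G) :
    z * (u * φ z * u⁻¹)⁻¹ ∈ N.comap (rho G) := by
  rw [mem_comap, map_mul, map_inv, ← rho_mul_toPerm_conj_rho u φ z]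
  simpa [mul_assoc] using mul_mem (hNnorm _ (rho_mem_Hol z) _ hq) (inv_mem hq)

theorem f_eq_conj_inv_of_h_eq_one (hh : ∀ σ : G, h σ = MulAut.conj (g σ) * f σ) {β : G}
    (hβ : h β = 1) : f β = MulAut.conj (g β)⁻¹ := by
  rw [map_inv]
  exact (inv_eq_of_mul_eq_one_right ((hh β).symm.trans hβ)).symm

theorem h_eq_one_of_f_eq_conj (hZ : center G = ⊥) (hh : ∀ σ : G, h σ = MulAut.conj (g σ) * f σ)
    (hN : (N : Set (Equiv.Perm G)) = {q | ∃ σ : G, q = rho G (g σ) * MulAut.toPerm G (f σ)})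
    (hNnorm : ∀ x ∈ Hol G, ∀ n ∈ N, x * n * x⁻¹ ∈ N) {μ β : G}
    (hμ : f μ = MulAut.conj (g β)) : h β = 1 := by
  have hn := rho_mul_toPerm_self_mem hN
  have hK := comap_lambda_normal hNnorm
  ext z
  suffices z * (h β z)⁻¹ = 1 from (mul_inv_eq_one.1 this).symm
  refine disjoint_def.1 (disjoint_comap_lambda_comap_rho hZ hN) ?_ ?_
  · -- modulo `λ⁻¹(N)` both `f μ = conj (g β)` and `f β` act trivially
    have hsplit : z * (h β z)⁻¹ = z * (f μ z)⁻¹ * (g β * (z * (f β z)⁻¹) * (g β)⁻¹) := by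
      rw [hμ, hh, MulAut.mul_apply, MulAut.conj_apply, MulAut.conj_apply]
      group
    rw [hsplit]
    exact mul_mem (mul_inv_apply_mem_comap_lambda hNnorm (hn μ) z)
      (hK.conj_mem _ (mul_inv_apply_mem_comap_lambda hNnorm (hn β) z) _)
  · rw [hh, MulAut.mul_apply, MulAut.conj_apply]
    exact mul_inv_conj_apply_mem_comap_rho hNnorm (hn β) z

theorem comap_f_range_conj_eq_sup_ker (hZ : center G = ⊥)
    (hh : ∀ σ : G, h σ = MulAut.conj (g σ) * f σ)
    (hN : (N : Set (Equiv.Perm G)) = {q | ∃ σ : G, q = rho G (g σ) * MulAut.toPerm G (f σ)})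
    (hNnorm : ∀ x ∈ Hol G, ∀ n ∈ N, x * n * x⁻¹ ∈ N) :
    (MulAut.conj : G →* MulAut G).range.comap f = f.ker ⊔ h.ker := by
  refine le_antisymm (fun μ hμ => ?_) (sup_le (fun a ha => ⟨1, ?_⟩) fun b hb => ⟨(g b)⁻¹, ?_⟩)
  · obtain ⟨w, hw⟩ := hμ
    obtain ⟨β, rfl⟩ := g.surjective w
    have hβ : h β = 1 := h_eq_one_of_f_eq_conj hZ hh hN hNnorm hw.symm
    have hμβ : f (μ * β) = 1 := by
      rw [map_mul, f_eq_conj_inv_of_h_eq_one hh hβ, ← hw, map_inv, mul_inv_cancel]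
    rw [← mul_inv_cancel_right μ β]
    exact mul_mem_sup hμβ (inv_mem hβ)
  · rw [map_one, f.mem_ker.1 ha]
  · exact (f_eq_conj_inv_of_h_eq_one hh hb).symm

theorem f_mul_h_eq (hh : ∀ σ : G, h σ = MulAut.conj (g σ) * f σ) (σ : G) :
    f σ * h σ = MulAut.conj (f σ (g σ)) * f (σ ^ 2) := by
  rw [hh, MulAut.conj_apply_mulAut, pow_two, map_mul]
  group

theorem f_mul_h_mem_range_conj_iff (hh : ∀ σ : G, h σ = MulAut.conj (g σ) * f σ) (σ : G) :
    f σ * h σ ∈ (MulAut.conj : G →* MulAut G).range ↔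
      σ ^ 2 ∈ (MulAut.conj : G →* MulAut G).range.comap f := by
  rw [f_mul_h_eq hh, mem_comap, mul_mem_cancel_left (MonoidHom.mem_range.2 ⟨f σ (g σ), rfl⟩)]

theorem exists_f_mul_h_eq_conj (hh : ∀ σ : G, h σ = MulAut.conj (g σ) * f σ)
    (hN : (N : Set (Equiv.Perm G)) = {q | ∃ σ : G, q = rho G (g σ) * MulAut.toPerm G (f σ)})
    (hNnorm : ∀ x ∈ Hol G, ∀ n ∈ N, x * n * x⁻¹ ∈ N) (φ : MulAut G) (σ : G) :
    ∃ σ', f σ' * h σ' = φ * (f σ * h σ) * φ⁻¹ := by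
  have hq := hNnorm _ (toPerm_mem_Hol φ) _ (rho_mul_toPerm_self_mem hN σ)
  rw [toPerm_conj_rho_mul_toPerm, rho_mul_toPerm_mem_iff hN] at hq
  obtain ⟨σ', hg, hf⟩ := hq
  refine ⟨σ', ?_⟩
  rw [hh, hh, hg, hf, MulAut.conj_apply_mulAut]
  group

theorem range_conj_subset_range_f_mul_h (hh : ∀ σ : G, h σ = MulAut.conj (g σ) * f σ)
    (hN : (N : Set (Equiv.Perm G)) = {q | ∃ σ : G, q = rho G (g σ) * MulAut.toPerm G (f σ)})
    (hNnorm : ∀ x ∈ Hol G, ∀ n ∈ N, x * n * x⁻¹ ∈ N) (hsq : ∀ σ : G, σ ^ 2 ∈ f.ker ⊔ h.ker) :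
    ((MulAut.conj : G →* MulAut G).range : Set (MulAut G)) ⊆ Set.range fun σ => f σ * h σ := by
  rintro _ ⟨τ, rfl⟩
  obtain ⟨ν, rfl⟩ := g.surjective τ
  obtain ⟨σ, hfσ, hhσ⟩ := f.exists_eq_and_eq_of_inv_mul_mem_sup_ker h (x := ν⁻¹) (y := ν)
    (by rw [inv_inv, ← pow_two]; exact hsq ν)
  obtain ⟨σ', hσ'⟩ := exists_f_mul_h_eq_conj hh hN hNnorm (f ν) σ
  refine ⟨σ', ?_⟩
  change f σ' * h σ' = _
  rw [hσ', hfσ, hhσ, hh, map_inv]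
  group

end RegularSubgroup

theorem fh_eq_inn_iff_elementary_two_abelian_general
    (G : Type*) [Group G] (hZ : Subgroup.center G = ⊥)
    (f h : G →* MulAut G) (g : Equiv.Perm G)
    (hh : ∀ σ : G, h σ = MulAut.conj (g σ) * f σ)
    (N : Subgroup (Equiv.Perm G))
    (hN : (N : Set (Equiv.Perm G))
      = {q | ∃ σ : G, q = rho G (g σ) * MulAut.toPerm G (f σ)})
    (hNnorm : ∀ x ∈ Hol G, ∀ n ∈ N, x * n * x⁻¹ ∈ N)
    :
    (Set.range (fun σ : G => f σ * h σ)
        = ((MulAut.conj : G →* MulAut G).range : Set (MulAut G))) ↔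
      ∀ σ : G, σ ^ 2 ∈ f.ker ⊔ h.ker := by
  have hker := comap_f_range_conj_eq_sup_ker hZ hh hN hNnorm
  constructor
  · intro hrange σ
    rw [← hker, ← f_mul_h_mem_range_conj_iff hh, ← SetLike.mem_coe, ← hrange]
    exact ⟨σ, rfl⟩
  · intro hsq
    refine Set.Subset.antisymm ?_ (range_conj_subset_range_f_mul_h hh hN hNnorm hsq)
    rintro _ ⟨σ, rfl⟩
    exact (f_mul_h_mem_range_conj_iff hh σ).2 (hker ▸ hsq σ)

/-- In the setup, `{f(σ)h(σ) : σ ∈ G} = Inn(G)` if and only if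
`G/(ker(f)·ker(h))` is elementary `2`-abelian, i.e. `σ² ∈ ker(f)·ker(h)` for all
`σ ∈ G` (here `ker(f)·ker(h) = ker f ⊔ ker h` since both kernels are normal). -/
theorem fh_eq_inn_iff_elementary_two_abelian
    (G : Type*) [Group G] (hZ : Subgroup.center G = ⊥)
    (f h : G →* MulAut G) (g : Equiv.Perm G) (hg1 : g 1 = 1)
    (hrel : ∀ σ τ : G, g (σ * τ) = g σ * (f σ) (g τ))
    (hh : ∀ σ : G, h σ = MulAut.conj (g σ) * f σ)
    (N : Subgroup (Equiv.Perm G))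
    (hN : (N : Set (Equiv.Perm G))
      = {q | ∃ σ : G, q = rho G (g σ) * MulAut.toPerm G (f σ)})
    (hNle : N ≤ Hol G)
    (hNnorm : ∀ x ∈ Hol G, ∀ n ∈ N, x * n * x⁻¹ ∈ N)
    :
    (Set.range (fun σ : G => f σ * h σ)
        = ((MulAut.conj : G →* MulAut G).range : Set (MulAut G))) ↔
      ∀ σ : G, σ ^ 2 ∈ f.ker ⊔ h.ker :=
  fh_eq_inn_iff_elementary_two_abelian_general G hZ f h g hh N hN hNnorm
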